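/- For a two-qubit pure state with Schmidt decomposition μ|00⟩ + ν|11⟩ (μ² + ν² = 1), the maximal violation of the CHSH-Bell inequality is γ = 2√(1 + C²) where C = 2|μν| is the concurrence; in particular 2 ≤ γ ≤ 2√2, with γ = 2√2 iff the state is maximally entangled (C = 1). -/

import Mathlib

open Matrix Kronecker

/-- The three Pauli matrices `σ_x, σ_y, σ_z`. -/
noncomputable def pauli : Fin 3 → Matrix (Fin 2) (Fin 2) ℂ :=
  ![!![0, 1; 1, 0], !![0, -Complex.I; Complex.I, 0], !![1, 0; 0, -1]]

/-- `a · σ` for a real 3-vector `a`. -/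
noncomputable def dotPauli (a : Fin 3 → ℝ) : Matrix (Fin 2) (Fin 2) ℂ :=
  ∑ i, (a i : ℂ) • pauli i

/-- The CHSH-Bell expectation `⟨ψ| a·σ⊗b·σ + a·σ⊗b'·σ + a'·σ⊗b·σ − a'·σ⊗b'·σ |ψ⟩`. -/
noncomputable def bellExp (ψ : Fin 2 × Fin 2 → ℂ) (a a' b b' : Fin 3 → ℝ) : ℝ :=
  (star ψ ⬝ᵥ ((dotPauli a ⊗ₖ dotPauli b + dotPauli a ⊗ₖ dotPauli b' +
      dotPauli a' ⊗ₖ dotPauli b - dotPauli a' ⊗ₖ dotPauli b').mulVec ψ)).re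

/-- For a two-qubit pure state with Schmidt decomposition `μ|00⟩ + ν|11⟩`
(`μ² + ν² = 1`), the maximal violation of the CHSH-Bell inequality is
`γ = 2√(1 + C²)` where `C = 2|μν|` is the concurrence; in particular
`2 ≤ γ ≤ 2√2`, with `γ = 2√2` iff the state is maximally entangled (`C = 1`). -/
lemma bell_formula (μ ν : ℝ) (a a' b b' : Fin 3 → ℝ) :
    bellExp (fun p => if p = (0, 0) then (μ : ℂ) else if p = (1, 1) then (ν : ℂ) else 0) a a' b b'
    = 2*μ*ν*((a 0)*(b 0 + b' 0) - (a 1)*(b 1 + b' 1)) + (μ^2+ν^2)*(a 2)*(b 2 + b' 2)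
    + 2*μ*ν*((a' 0)*(b 0 - b' 0) - (a' 1)*(b 1 - b' 1)) + (μ^2+ν^2)*(a' 2)*(b 2 - b' 2) := by
  simp [bellExp, dotPauli, pauli, Matrix.mulVec, dotProduct, Fintype.sum_prod_type,
    Fin.sum_univ_three, Fin.sum_univ_two, Matrix.kroneckerMap_apply, Matrix.add_apply,
    Matrix.sub_apply, Matrix.smul_apply, Prod.ext_iff, Fin.ext_iff, Complex.ext_iff, -Fin.val_eq_zero_iff]
  ring

set_option maxHeartbeats 1000000 in
lemma cs3 (c a0 a1 a2 u0 u1 u2 : ℝ) (ha : a0^2+a1^2+a2^2 = 1) :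
    c*(a0*u0 - a1*u1) + a2*u2 ≤ Real.sqrt (c^2*u0^2 + c^2*u1^2 + u2^2) := by
  have hA : (0:ℝ) ≤ c^2*u0^2 + c^2*u1^2 + u2^2 := by positivity
  have hsq : (c*(a0*u0 - a1*u1) + a2*u2)^2 ≤ c^2*u0^2 + c^2*u1^2 + u2^2 := by
    nlinarith [sq_nonneg (a0*c*u1 + a1*c*u0), sq_nonneg (a0*u2 - a2*c*u0),
      sq_nonneg (a1*u2 + a2*c*u1), ha]
  calc c*(a0*u0 - a1*u1) + a2*u2 ≤ |c*(a0*u0 - a1*u1) + a2*u2| := le_abs_self _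
    _ = Real.sqrt ((c*(a0*u0 - a1*u1) + a2*u2)^2) := (Real.sqrt_sq_eq_abs _).symm
    _ ≤ Real.sqrt _ := Real.sqrt_le_sqrt hsq

set_option maxHeartbeats 1000000 in
lemma chsh_aux (c a0 a1 a2 a0' a1' a2' u0 u1 u2 v0 v1 v2 : ℝ)
    (hc : c^2 ≤ 1)
    (ha : a0^2+a1^2+a2^2 = 1) (ha' : a0'^2+a1'^2+a2'^2 = 1)
    (horth : u0*v0 + u1*v1 + u2*v2 = 0)
    (hsum : (u0^2+u1^2+u2^2) + (v0^2+v1^2+v2^2) = 4) :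
    c*(a0*u0 - a1*u1) + a2*u2 + (c*(a0'*v0 - a1'*v1) + a2'*v2)
      ≤ 2 * Real.sqrt (1 + c^2) := by
  have hA : (0:ℝ) ≤ c^2*u0^2 + c^2*u1^2 + u2^2 := by positivity
  have hB : (0:ℝ) ≤ c^2*v0^2 + c^2*v1^2 + v2^2 := by positivity
  have h1 := cs3 c a0 a1 a2 u0 u1 u2 ha
  have h2 := cs3 c a0' a1' a2' v0 v1 v2 ha'
  have hK : u2^2*(v0^2+v1^2+v2^2) + v2^2*(u0^2+u1^2+u2^2)
      ≤ (u0^2+u1^2+u2^2)*(v0^2+v1^2+v2^2) := by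
    have hlin : u0*v0 + u1*v1 = -(u2*v2) := by linarith
    have hdot : (u0*v0+u1*v1)^2 = u2^2*v2^2 := by rw [hlin]; ring
    nlinarith [sq_nonneg (u0*v1 - u1*v0), hdot]
  have h4 : (0:ℝ) ≤ 1 - c^4 := by nlinarith [sq_nonneg c]
  have hprod : (c^2*u0^2 + c^2*u1^2 + u2^2)*(c^2*v0^2 + c^2*v1^2 + v2^2)
      ≤ (u0^2+u1^2+c^2*u2^2)*(v0^2+v1^2+c^2*v2^2) := by
    nlinarith [mul_nonneg h4 (sub_nonneg.2 hK)]
  have hsqrtAB : Real.sqrt (c^2*u0^2 + c^2*u1^2 + u2^2) * Real.sqrt (c^2*v0^2 + c^2*v1^2 + v2^2)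
      ≤ ((u0^2+u1^2+c^2*u2^2)+(v0^2+v1^2+c^2*v2^2))/2 := by
    rw [← Real.sqrt_mul hA]
    have hABle : (c^2*u0^2 + c^2*u1^2 + u2^2)*(c^2*v0^2 + c^2*v1^2 + v2^2)
        ≤ (((u0^2+u1^2+c^2*u2^2)+(v0^2+v1^2+c^2*v2^2))/2)^2 := by
      nlinarith [sq_nonneg ((u0^2+u1^2+c^2*u2^2)-(v0^2+v1^2+c^2*v2^2)), hprod]
    calc Real.sqrt _ ≤ Real.sqrt ((((u0^2+u1^2+c^2*u2^2)+(v0^2+v1^2+c^2*v2^2))/2)^2) :=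
          Real.sqrt_le_sqrt hABle
      _ = _ := Real.sqrt_sq (by positivity)
  have hs0 : 0 ≤ Real.sqrt (c^2*u0^2 + c^2*u1^2 + u2^2) + Real.sqrt (c^2*v0^2 + c^2*v1^2 + v2^2) := by
    positivity
  have hs2 : (Real.sqrt (c^2*u0^2 + c^2*u1^2 + u2^2) + Real.sqrt (c^2*v0^2 + c^2*v1^2 + v2^2))^2
      ≤ 4*(1+c^2) := by
    nlinarith [Real.sq_sqrt hA, Real.sq_sqrt hB, hsqrtAB, hsum]
  have h5 : Real.sqrt (c^2*u0^2 + c^2*u1^2 + u2^2) + Real.sqrt (c^2*v0^2 + c^2*v1^2 + v2^2)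
      ≤ Real.sqrt (4*(1+c^2)) := by
    have := Real.sqrt_le_sqrt hs2
    rwa [Real.sqrt_sq hs0] at this
  have h6 : Real.sqrt (4*(1+c^2)) = 2 * Real.sqrt (1+c^2) := by
    rw [Real.sqrt_mul (by norm_num), show (4:ℝ) = 2^2 by norm_num, Real.sqrt_sq (by norm_num)]
  linarith

theorem stmt_13 (μ ν : ℝ) (h : μ ^ 2 + ν ^ 2 = 1) :
    IsGreatest {γ : ℝ | ∃ a a' b b' : Fin 3 → ℝ,
        a ⬝ᵥ a = 1 ∧ a' ⬝ᵥ a' = 1 ∧ b ⬝ᵥ b = 1 ∧ b' ⬝ᵥ b' = 1 ∧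
        γ = bellExp (fun p => if p = (0, 0) then (μ : ℂ) else if p = (1, 1) then (ν : ℂ)
          else 0) a a' b b'}
      (2 * Real.sqrt (1 + (2 * |μ * ν|) ^ 2)) ∧
    2 ≤ 2 * Real.sqrt (1 + (2 * |μ * ν|) ^ 2) ∧
    2 * Real.sqrt (1 + (2 * |μ * ν|) ^ 2) ≤ 2 * Real.sqrt 2 ∧
    (2 * Real.sqrt (1 + (2 * |μ * ν|) ^ 2) = 2 * Real.sqrt 2 ↔ 2 * |μ * ν| = 1) := by
  have hCsq : (2 * |μ * ν|) ^ 2 = (2*μ*ν)^2 := by rw [mul_pow, sq_abs]; ring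
  have hKarg : (1:ℝ) + (2 * |μ * ν|) ^ 2 = 1 + (2*μ*ν)^2 := by rw [hCsq]
  have hc2 : (2*μ*ν)^2 ≤ 1 := by nlinarith [sq_nonneg (μ^2 - ν^2)]
  have hKpos : (0:ℝ) < 1 + (2*μ*ν)^2 := by positivity
  set D := Real.sqrt (1 + (2 * |μ * ν|) ^ 2) with hDdef
  have hD2 : D^2 = 1 + (2*μ*ν)^2 := by
    rw [hDdef, Real.sq_sqrt (by positivity), hKarg]
  have hDpos : 0 < D := by
    rw [hDdef]; exact Real.sqrt_pos.2 (by positivity)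
  refine ⟨⟨?_, ?_⟩, ?_, ?_, ?_⟩
  · -- membership
    refine ⟨![0,0,1], ![1,0,0], ![2*μ*ν/D, 0, 1/D], ![-(2*μ*ν)/D, 0, 1/D], ?_, ?_, ?_, ?_, ?_⟩
    · simp [dotProduct, Fin.sum_univ_three]
    · simp [dotProduct, Fin.sum_univ_three]
    · simp only [dotProduct, Fin.sum_univ_three, Matrix.cons_val_zero, Matrix.cons_val_one,
        Matrix.head_cons, Matrix.cons_val_two, Matrix.tail_cons]
      field_simp
      nlinarith [hD2]
    · simp only [dotProduct, Fin.sum_univ_three, Matrix.cons_val_zero, Matrix.cons_val_one,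
        Matrix.head_cons, Matrix.cons_val_two, Matrix.tail_cons]
      field_simp
      nlinarith [hD2]
    · rw [bell_formula]
      simp only [Matrix.cons_val_zero, Matrix.cons_val_one, Matrix.head_cons,
        Matrix.cons_val_two, Matrix.tail_cons]
      rw [h]
      field_simp
      nlinarith [hD2, hDpos]
  · -- upper bound
    rintro γ ⟨a, a', b, b', ha, ha', hb, hb', rfl⟩
    rw [bell_formula, h]
    have ha2 : (a 0)^2 + (a 1)^2 + (a 2)^2 = 1 := by
      simp [dotProduct, Fin.sum_univ_three] at ha; linear_combination ha
    have ha'2 : (a' 0)^2 + (a' 1)^2 + (a' 2)^2 = 1 := by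
      simp [dotProduct, Fin.sum_univ_three] at ha'; linear_combination ha'
    have hb2 : (b 0)^2 + (b 1)^2 + (b 2)^2 = 1 := by
      simp [dotProduct, Fin.sum_univ_three] at hb; linear_combination hb
    have hb'2 : (b' 0)^2 + (b' 1)^2 + (b' 2)^2 = 1 := by
      simp [dotProduct, Fin.sum_univ_three] at hb'; linear_combination hb'
    have key := chsh_aux (2*μ*ν) (a 0) (a 1) (a 2) (a' 0) (a' 1) (a' 2)
      (b 0 + b' 0) (b 1 + b' 1) (b 2 + b' 2) (b 0 - b' 0) (b 1 - b' 1) (b 2 - b' 2)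
      hc2 ha2 ha'2 (by linear_combination hb2 - hb'2) (by linear_combination 2*hb2 + 2*hb'2)
    have hEq : 2 * Real.sqrt (1 + (2*μ*ν)^2) = 2 * D := by rw [hDdef, hKarg]
    calc 2*μ*ν*((a 0)*(b 0 + b' 0) - (a 1)*(b 1 + b' 1)) + 1*(a 2)*(b 2 + b' 2)
        + 2*μ*ν*((a' 0)*(b 0 - b' 0) - (a' 1)*(b 1 - b' 1)) + 1*(a' 2)*(b 2 - b' 2)
        ≤ 2 * Real.sqrt (1 + (2*μ*ν)^2) := by linarith [key]
      _ = 2 * D := hEq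
  · -- 2 ≤ γ
    have : (1:ℝ) ≤ D := by
      have h1 : Real.sqrt 1 ≤ D := by
        rw [hDdef]
        exact Real.sqrt_le_sqrt (le_add_of_nonneg_right (by positivity))
      rwa [Real.sqrt_one] at h1
    linarith
  · -- γ ≤ 2√2
    have : D ≤ Real.sqrt 2 := by
      rw [hDdef]
      exact Real.sqrt_le_sqrt (by nlinarith [hCsq])
    linarith
  · -- iff
    constructor
    · intro hEq
      have hD22 : D^2 = 2 := by
        have h1 : D = Real.sqrt 2 := by linarith
        rw [h1, Real.sq_sqrt (by norm_num)]
      have hsq1 : (2*|μ*ν|)^2 = 1 := by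
        have := hD2
        rw [hD22] at this
        nlinarith [hCsq]
      have hfac : (2*|μ*ν| - 1) * (2*|μ*ν| + 1) = 0 := by nlinarith [hsq1]
      rcases mul_eq_zero.1 hfac with h1 | h1
      · linarith
      · have : 0 ≤ 2*|μ*ν| := by positivity
        linarith
    · intro hC
      rw [hDdef, hC]
      norm_num
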